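/- Let α > 0, n ≥ 2, and q_1 > q_2 > … > q_n real numbers, normalized so that x := (q_1 − q_2, q_2 − q_3, …, q_{n−1} − q_n) satisfies ∑_{i=1}^{n−1} x_i = 1 (i.e. q_1 − q_n = 1). Let Y_k ∈ ℝ^{n−1} (k = 1, …, n) have components Y_{ik} = Q_{ik} − Q_{i+1,k}. Then there exist m_1, …, m_n > 0 with x = ∑_{k=1}^n m_k Y_k if and only if there exist positive masses m_1, …, m_n > 0 and λ < 0 such that q is a central configuration, i.e. λ m_j (q_j − q_0) = −α ∑_{k≠j} m_j m_k Q_{jk} for every j, where q_0 = (∑_j m_j q_j)/(∑_j m_j). -/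
import Mathlib


/-- for a normalized ordered configuration (`q_1 − q_n = 1`), the gap
vector `x` is a positive combination `x = ∑ m_k Y_k` iff `q` is a central
configuration for some positive masses and some `λ < 0`. -/
theorem stmt16 (n : ℕ) (hn : 2 ≤ n) (α : ℝ) (hα : 0 < α)
    (q : Fin n → ℝ) (hq : StrictAnti q)
    (hnorm : q ⟨0, by omega⟩ - q ⟨n - 1, by omega⟩ = 1)
    (Q : Matrix (Fin n) (Fin n) ℝ)
    (hQ : ∀ i j, Q i j = (q i - q j) * |q i - q j| ^ (-α - 2))
    (x : Fin (n - 1) → ℝ)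
    (hx : ∀ i : Fin (n - 1),
      x i = q ⟨i, by have := i.isLt; omega⟩ - q ⟨(i : ℕ) + 1, by have := i.isLt; omega⟩)
    (Y : Fin n → Fin (n - 1) → ℝ)
    (hY : ∀ (k : Fin n) (i : Fin (n - 1)),
      Y k i = Q ⟨i, by have := i.isLt; omega⟩ k -
              Q ⟨(i : ℕ) + 1, by have := i.isLt; omega⟩ k) :
    (∃ m : Fin n → ℝ, (∀ k, 0 < m k) ∧ x = ∑ k, m k • Y k) ↔
    (∃ (m : Fin n → ℝ) (lam : ℝ), (∀ k, 0 < m k) ∧ lam < 0 ∧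
      ∀ j, lam * m j * (q j - (∑ k, m k * q k) / (∑ k, m k)) =
        -α * ∑ k ∈ Finset.univ.erase j, m j * m k * Q j k) := by
  have hQanti : ∀ j k, Q j k = - Q k j := by
    intro j k
    rw [hQ, hQ, abs_sub_comm]
    ring
  have hQdiag : ∀ j, Q j j = 0 := by
    intro j; rw [hQ]; simp
  constructor
  · rintro ⟨m, hm, hxm⟩
    set M := ∑ k, m k with hM
    have hMpos : 0 < M :=
      Finset.sum_pos (fun k _ => hm k) ⟨⟨0, by omega⟩, Finset.mem_univ _⟩
    set F : Fin n → ℝ := fun j => ∑ k, m k * Q j k with hF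
    -- gap relation in terms of F
    have key : ∀ j : ℕ, (h : j + 1 < n) →
        q ⟨j, by omega⟩ - q ⟨j + 1, h⟩ = F ⟨j, by omega⟩ - F ⟨j + 1, h⟩ := by
      intro j h
      have hlt : j < n - 1 := by omega
      have h1 := congrFun hxm (⟨j, hlt⟩ : Fin (n - 1))
      rw [hx ⟨j, hlt⟩] at h1
      have h2 : (∑ k, m k • Y k) (⟨j, hlt⟩ : Fin (n - 1)) =
          F ⟨j, by omega⟩ - F ⟨j + 1, h⟩ := by
        rw [Finset.sum_apply]
        simp only [Pi.smul_apply, smul_eq_mul, hY]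
        rw [hF]
        rw [← Finset.sum_sub_distrib]
        exact Finset.sum_congr rfl fun k _ => by ring
      rw [h2] at h1
      exact h1
    -- constancy of q - F
    have hconst : ∀ j : Fin n, q j - F j = q ⟨0, by omega⟩ - F ⟨0, by omega⟩ := by
      rintro ⟨j, hj⟩
      induction j with
      | zero => rfl
      | succ j ih =>
        have hj' : j < n := by omega
        have hk := key j hj
        have := ih hj'
        linarith
    set c : ℝ := q ⟨0, by omega⟩ - F ⟨0, by omega⟩ with hc
    have hcval : ∀ k, F k = q k - c := fun k => by
      have := hconst k; linarith
    -- antisymmetry: sum of m_j F_j vanishes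
    have hsum0 : ∑ j, m j * F j = 0 := by
      have h1 : ∑ j, m j * F j = ∑ j, ∑ k, m j * (m k * Q j k) := by
        simp only [hF, Finset.mul_sum]
      have h2 : (∑ j, ∑ k, m j * (m k * Q j k)) =
          -∑ j, ∑ k, m j * (m k * Q j k) := by
        conv_lhs => rw [Finset.sum_comm]
        rw [← Finset.sum_neg_distrib]
        refine Finset.sum_congr rfl fun k _ => ?_
        rw [← Finset.sum_neg_distrib]
        refine Finset.sum_congr rfl fun j _ => ?_
        rw [hQanti j k]; ring
      rw [h1]; linarith [h2]
    have hqc : ∑ k, m k * q k = c * M := by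
      have h : ∑ k, m k * (q k - c) = 0 := by
        rw [← hsum0]
        exact Finset.sum_congr rfl fun k _ => by rw [hcval k]
      have hexp : ∑ k, m k * (q k - c) = (∑ k, m k * q k) - M * c := by
        simp only [mul_sub, Finset.sum_sub_distrib, hM, ← Finset.sum_mul]
      rw [hexp] at h
      linarith
    have hq0 : (∑ k, m k * q k) / M = c := by
      rw [hqc]; field_simp
    have herase : ∀ j, ∑ k ∈ Finset.univ.erase j, m j * m k * Q j k = m j * F j := by
      intro j
      have h0 : m j * m j * Q j j = 0 := by rw [hQdiag]; ring
      rw [Finset.sum_erase (f := fun k => m j * m k * Q j k) Finset.univ h0, hF, Finset.mul_sum]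
      exact Finset.sum_congr rfl fun k _ => by ring
    refine ⟨m, -α, hm, by linarith, fun j => ?_⟩
    rw [herase j, hq0, hcval j]
    ring
  · rintro ⟨m, lam, hm, hlam, hcc⟩
    set F : Fin n → ℝ := fun j => ∑ k, m k * Q j k with hF
    have herase : ∀ j, ∑ k ∈ Finset.univ.erase j, m j * m k * Q j k = m j * F j := by
      intro j
      have h0 : m j * m j * Q j j = 0 := by rw [hQdiag]; ring
      rw [Finset.sum_erase (f := fun k => m j * m k * Q j k) Finset.univ h0, hF, Finset.mul_sum]
      exact Finset.sum_congr rfl fun k _ => by ring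
    have hFj : ∀ j, lam * (q j - (∑ k, m k * q k) / (∑ k, m k)) = -α * F j := by
      intro j
      have h1 := hcc j
      rw [herase j] at h1
      have hmj : m j ≠ 0 := (hm j).ne'
      refine mul_left_cancel₀ hmj ?_
      linear_combination h1
    have hlampos : 0 < -lam := by linarith
    refine ⟨fun k => α / (-lam) * m k, fun k => mul_pos (div_pos hα hlampos) (hm k), ?_⟩
    funext i
    rw [hx i, Finset.sum_apply]
    simp only [Pi.smul_apply, smul_eq_mul, hY]
    set a : Fin n := ⟨(i : ℕ), by have := i.isLt; omega⟩ with ha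
    set b : Fin n := ⟨(i : ℕ) + 1, by have := i.isLt; omega⟩ with hb
    show q a - q b = ∑ k, α / (-lam) * m k * (Q a k - Q b k)
    have hsum : ∑ k, α / (-lam) * m k * (Q a k - Q b k) =
        α / (-lam) * (F a - F b) := by
      rw [hF, mul_sub, Finset.mul_sum, Finset.mul_sum, ← Finset.sum_sub_distrib]
      exact Finset.sum_congr rfl fun k _ => by ring
    rw [hsum]
    have hFa := hFj a
    have hFb := hFj b
    have hlam0 : lam ≠ 0 := ne_of_lt hlam
    field_simp
    linarith [hFa, hFb]
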